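/- In a solid, every individualized unity expands as u(x) = 1 + e(u(x)) for zeroless x, where 1 is the multiplicative identity. -/

import Mathlib

structure Assembly (A : Type*) where
  add : A → A → A
  e : A → A
  neg : A → A
  add_assoc : ∀ x y z, add x (add y z) = add (add x y) z
  add_comm : ∀ x y, add x y = add y x
  add_e : ∀ x, add x (e x) = x
  e_max : ∀ x f, add x f = x → add (e x) f = e x
  add_neg : ∀ x, add x (neg x) = e x
  e_neg : ∀ x, e (neg x) = e x
  e_add : ∀ x y, e (add x y) = e x ∨ e (add x y) = e y

structure OrderedAssembly (A : Type*) extends Assembly A where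
  le : A → A → Prop
  le_refl : ∀ x, le x x
  le_antisymm : ∀ x y, le x y → le y x → x = y
  le_trans : ∀ x y z, le x y → le y z → le x z
  le_total : ∀ x y, le x y ∨ le y x
  add_le_add : ∀ x y z, le x y → le (add x z) (add y z)
  le_e : ∀ x y, add y (e x) = e x → le y (e x) ∧ le (neg y) (e x)

structure Solid (A : Type*) extends OrderedAssembly A where
  mul : A → A → A
  u : A → A
  inv : A → A
  mul_assoc : ∀ x y z, mul x (mul y z) = mul (mul x y) z
  mul_comm : ∀ x y, mul x y = mul y x
  mul_u : ∀ x, x ≠ e x → mul x (u x) = x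
  u_max : ∀ x, x ≠ e x → ∀ v, mul x v = x → mul (u x) v = u x
  mul_inv : ∀ x, x ≠ e x → mul x (inv x) = u x
  u_inv : ∀ x, x ≠ e x → u (inv x) = u x
  u_mul : ∀ x y, x ≠ e x → y ≠ e y →
    u (mul x y) = u x ∨ u (mul x y) = u y
  compat_mul : ∀ x y z, le (e x) x → e x ≠ x → le y z → le (mul x y) (mul x z)
  amplification : ∀ x y z, le (e y) y → le y z → le (mul (e x) y) (mul (e x) z)
  escala : ∀ x y, ∃ z, mul (e x) y = e z
  e_mul : ∀ x y, e (mul x y) = add (mul (e x) y) (mul (e y) x)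
  e_u : ∀ x, x ≠ e x → e (u x) = mul (e x) (inv x)
  dist : ∀ x y z, add (mul x y) (mul x z) =
    add (add (mul x (add y z)) (mul (e x) y)) (mul (e x) z)
  neg_mul : ∀ x y, neg (mul x y) = mul (neg x) y
  zero : A
  add_zero : ∀ x, add x zero = x
  one : A
  one_mul : ∀ x, mul one x = x
  M : A
  e_add_M : ∀ x, add (e x) M = M
  exists_neutrix : ∃ x, e x ≠ zero ∧ e x ≠ M
  decomp : ∀ x, ∃ a, x = add a (e x) ∧ e a = zero
  dense : ∀ x y, x = e x → y = e y → le x y → x ≠ y →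
    ∃ z, z ≠ e z ∧ le x z ∧ x ≠ z ∧ le z y ∧ z ≠ y

/-! Put `p = u x`, a zeroless idempotent, `E = e p`, and decompose `p = a + E` with `a` precise.
Amplification and distributivity give `E * a = E * p = E`, and from this one computes, for
`z = 1 + E`, that `z * p = p`, `z * a = p` and `p * a = p`. The unity axiom gives
`p = u p = u (z * a) ∈ {u z, u a}`. If `p = u z` then `z = z * p = p`. If `p = u a` then
`a = a * p = p`, so `p` is precise, and a precise zeroless idempotent is `1`: otherwise `p` and
`s = 1 - p` would be nonnegative zeroless idempotents with `p * s = 0`, and if, say, `p ≤ s`, then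
`0 ≤ p = p * p ≤ p * s = 0`. -/

namespace Assembly

variable {A : Type*} (S : Assembly A)

theorem e_add_e_self (x : A) : S.add (S.e x) (S.e x) = S.e x :=
  S.e_max x (S.e x) (S.add_e x)

theorem e_e (x : A) : S.e (S.e x) = S.e x := by
  calc S.e (S.e x) = S.add (S.e (S.e x)) (S.e x) := (S.e_max _ _ (S.e_add_e_self x)).symm
    _ = S.add (S.e x) (S.e (S.e x)) := S.add_comm _ _
    _ = S.e x := S.add_e _

theorem e_add_eq_add_e (x y : A) : S.e (S.add x y) = S.add (S.e x) (S.e y) := by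
  have hx : S.add (S.add x y) (S.e x) = S.add x y := by
    rw [S.add_comm x y, ← S.add_assoc, S.add_e]
  have hy : S.add (S.add x y) (S.e y) = S.add x y := by
    rw [← S.add_assoc, S.add_e]
  have hx' := S.e_max _ _ hx
  have hy' := S.e_max _ _ hy
  rcases S.e_add x y with h | h <;> rw [h] at hx' hy' ⊢
  · exact hy'.symm
  · rw [S.add_comm]; exact hx'.symm

theorem add_eq_left_of_add_e_eq {x n : A} (h : S.add n (S.e x) = S.e x) : S.add x n = x := by
  rw [← S.add_e x, ← S.add_assoc, S.add_comm (S.e x), h]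

theorem neg_eq_of_add_eq {q w : A} (h : S.add q w = S.e q) (hw : S.e w = S.e q) :
    S.neg q = w := by
  calc S.neg q = S.add (S.neg q) (S.e q) := by rw [← S.e_neg, S.add_e]
    _ = S.add (S.add q (S.neg q)) w := by rw [← h, S.add_assoc, S.add_comm (S.neg q) q]
    _ = S.add w (S.e w) := by rw [S.add_neg, S.add_comm, hw]
    _ = w := S.add_e w

theorem neg_neg (x : A) : S.neg (S.neg x) = x :=
  S.neg_eq_of_add_eq (by rw [S.add_comm, S.add_neg, S.e_neg]) (S.e_neg x).symm

theorem neg_injective {x y : A} (h : S.neg x = S.neg y) : x = y := by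
  rw [← S.neg_neg x, h, S.neg_neg]

theorem neg_e (x : A) : S.neg (S.e x) = S.e x :=
  S.neg_eq_of_add_eq (by rw [S.e_e, S.e_add_e_self]) rfl

theorem neg_add (x y : A) : S.neg (S.add x y) = S.add (S.neg x) (S.neg y) := by
  apply S.neg_eq_of_add_eq
  · calc S.add (S.add x y) (S.add (S.neg x) (S.neg y))
        = S.add (S.add x (S.neg x)) (S.add y (S.neg y)) := by
          rw [S.add_assoc, ← S.add_assoc x y, S.add_comm y, S.add_assoc, ← S.add_assoc]
      _ = S.e (S.add x y) := by rw [S.add_neg, S.add_neg, S.e_add_eq_add_e]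
  · rw [S.e_add_eq_add_e, S.e_add_eq_add_e, S.e_neg, S.e_neg]

theorem neg_ne_e {x : A} (hx : x ≠ S.e x) : S.neg x ≠ S.e (S.neg x) := by
  rw [S.e_neg]
  intro h
  apply hx
  calc x = S.neg (S.neg x) := (S.neg_neg x).symm
    _ = S.neg (S.e x) := by rw [h]
    _ = S.e x := S.neg_e x

end Assembly

namespace Solid

variable {A : Type*} (S : Solid A)

theorem zero_add (x : A) : S.add S.zero x = x := by
  rw [S.add_comm, S.add_zero]

theorem e_zero : S.e S.zero = S.zero := by
  calc S.e S.zero = S.add S.zero (S.e S.zero) := (S.zero_add _).symm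
    _ = S.zero := S.add_e _

theorem neg_zero : S.neg S.zero = S.zero := by
  rw [← S.e_zero, S.neg_e]

theorem mul_one (x : A) : S.mul x S.one = x := by
  rw [S.mul_comm, S.one_mul]

theorem zero_le_e (x : A) : S.le S.zero (S.e x) :=
  (S.le_e x S.zero (S.zero_add _)).1

theorem zero_le_neg {c : A} (hc : S.e c = S.zero) (h : S.le c S.zero) :
    S.le S.zero (S.neg c) := by
  simpa only [S.add_neg, hc, S.zero_add] using S.add_le_add c S.zero (S.neg c) h

theorem add_eq_right_of_le {n m : A} (hn : S.e n = n) (hm : S.e m = m) (h : S.le n m) :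
    S.add n m = m := by
  apply S.le_antisymm
  · have hmm : S.add m m = m := by simpa only [hm] using S.e_add_e_self m
    simpa only [hmm] using S.add_le_add n m m h
  · simpa only [S.zero_add] using S.add_le_add S.zero n m (hn ▸ S.zero_le_e n)

theorem e_e_mul (x y : A) : S.e (S.mul (S.e x) y) = S.mul (S.e x) y := by
  obtain ⟨z, hz⟩ := S.escala x y
  rw [hz, S.e_e]

theorem add_e_mul_of_le {x y x' y' : A} (h : S.le (S.mul (S.e x) y) (S.mul (S.e x') y')) :
    S.add (S.mul (S.e x) y) (S.mul (S.e x') y') = S.mul (S.e x') y' :=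
  S.add_eq_right_of_le (S.e_e_mul x y) (S.e_e_mul x' y') h

theorem ne_e_of_mul_ne_e {v w : A} (h : S.mul v w ≠ S.e (S.mul v w)) : v ≠ S.e v := by
  intro hv
  apply h
  rw [hv, S.e_e_mul]

theorem e_mul_eq_e_mul_of_nonneg {w c : A} (hw : w ≠ S.e w) (hd : w = S.add c (S.e w))
    (hc : S.e c = S.zero) (hc0 : S.le S.zero c) :
    S.mul (S.e w) c = S.mul (S.e w) w := by
  have hEc : S.le (S.e w) c := by
    refine (S.le_total c (S.e w)).resolve_left fun h => hw (S.le_antisymm _ _ ?_ ?_)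
    · simpa only [S.e_add_e_self, ← hd] using S.add_le_add c (S.e w) (S.e w) h
    · simpa only [S.zero_add, ← hd] using S.add_le_add S.zero c (S.e w) hc0
  have hcw : S.le c w := by
    simpa only [S.zero_add, S.add_comm (S.e w) c, ← hd] using
      S.add_le_add S.zero (S.e w) c (S.zero_le_e w)
  -- `E * E ≤ E * c ≤ E * w` by amplification; distributivity over `w = c + E` closes the gap.
  have hEcw := S.amplification w c w (by rw [hc]; exact hc0) hcw
  have hEE := S.amplification w (S.e w) c (by rw [S.e_e]; exact S.le_refl _) hEc
  have hcE : S.add (S.mul (S.e w) c) (S.mul (S.e w) (S.e w)) = S.mul (S.e w) c := by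
    rw [S.add_comm, S.add_e_mul_of_le hEE]
  have hdist := S.dist (S.e w) c (S.e w)
  rw [S.e_e, ← hd, hcE, ← S.add_assoc, hcE] at hdist
  rw [hdist, S.add_comm, S.add_e_mul_of_le hEcw]

theorem e_mul_eq_e_mul_of_decomp {w c : A} (hw : w ≠ S.e w) (hd : w = S.add c (S.e w))
    (hc : S.e c = S.zero) : S.mul (S.e w) c = S.mul (S.e w) w := by
  rcases S.le_total S.zero c with hc0 | hc0
  · exact S.e_mul_eq_e_mul_of_nonneg hw hd hc hc0
  · have hd' : S.neg w = S.add (S.neg c) (S.e (S.neg w)) := by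
      rw [S.e_neg]
      conv_lhs => rw [hd]
      rw [S.neg_add, S.neg_e]
    have key := S.e_mul_eq_e_mul_of_nonneg (S.neg_ne_e hw) hd' (by rw [S.e_neg, hc])
      (S.zero_le_neg hc hc0)
    rw [S.e_neg, S.mul_comm, ← S.neg_mul, S.mul_comm _ (S.neg w), ← S.neg_mul] at key
    rw [S.mul_comm, S.mul_comm (S.e w), S.neg_injective key]

theorem e_one (h1 : S.one ≠ S.e S.one) : S.e S.one = S.zero := by
  obtain ⟨c, hd, hc⟩ := S.decomp S.one
  have key := S.e_mul_eq_e_mul_of_decomp h1 hd hc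
  have he := S.e_mul S.one c
  rw [S.one_mul, hc, key, S.mul_one, S.mul_one S.zero, S.add_zero] at he
  exact he.symm

theorem u_eq_self_of_mul_self {p : A} (hp : p ≠ S.e p) (hpp : S.mul p p = p) : S.u p = p := by
  rw [← S.u_max p hp p hpp, S.mul_comm, S.mul_u p hp]

theorem e_mul_self_of_mul_self {p : A} (hpp : S.mul p p = p) : S.mul (S.e p) p = S.e p := by
  have h := S.e_mul p p
  obtain ⟨z, hz⟩ := S.escala p p
  rw [hpp, hz] at h
  rw [hz, h, S.e_add_e_self]

theorem add_e_mul_e_self {w : A} (hw : S.mul (S.e w) w = S.e w) :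
    S.add (S.mul (S.e w) (S.e w)) (S.e w) = S.e w := by
  have h := S.e_mul (S.e w) w
  rw [hw, S.e_e, hw] at h
  rw [S.add_comm]
  exact h.symm

theorem add_mul_zero_e {w : A} (hw : S.mul (S.e w) w = S.e w) :
    S.add (S.mul w S.zero) (S.e w) = S.e w := by
  have hEE := S.add_e_mul_e_self hw
  have hE0 : S.add (S.mul (S.e w) S.zero) (S.e w) = S.e w := by
    have h := S.amplification w S.zero (S.e w) (by rw [S.e_zero]; exact S.le_refl _)
      (S.zero_le_e w)
    calc S.add (S.mul (S.e w) S.zero) (S.e w)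
        = S.add (S.mul (S.e w) S.zero) (S.add (S.mul (S.e w) (S.e w)) (S.e w)) := by rw [hEE]
      _ = S.e w := by rw [S.add_assoc, S.add_e_mul_of_le h, hEE]
  have hd := S.dist w S.zero (S.e w)
  rw [S.zero_add, S.mul_comm w (S.e w), hw, S.add_comm (S.e w) (S.mul (S.e w) S.zero), hE0,
    S.add_comm (S.e w), hEE] at hd
  exact hd

theorem mul_eq_of_decomp {p a y : A} (hp : p ≠ S.e p) (hpp : S.mul p p = p)
    (hd : p = S.add a (S.e p)) (ha : S.e a = S.zero)
    (hy : S.e y = S.e p) (hEy : S.mul (S.e p) y = S.e p) (hyp : S.mul y p = p) :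
    S.mul y a = p := by
  have hEp := S.e_mul_self_of_mul_self hpp
  have hEa : S.mul (S.e p) a = S.e p := by
    rw [S.e_mul_eq_e_mul_of_decomp hp hd ha, hEp]
  have hy0 : S.add (S.mul y S.zero) (S.e p) = S.e p :=
    hy ▸ S.add_mul_zero_e (by rw [hy, hEy])
  have he : S.e (S.mul y a) = S.e p := by
    rw [S.e_mul, hy, hEa, ha, S.mul_comm S.zero, S.add_comm, hy0]
  have hpEE : S.add p (S.mul (S.e p) (S.e p)) = p :=
    S.add_eq_left_of_add_e_eq (S.add_e_mul_e_self hEp)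
  have hdist := S.dist y a (S.e p)
  rw [hy, ← hd, hyp, hEa, S.mul_comm y (S.e p), hEy, S.add_e, hpEE, ← he, S.add_e] at hdist
  exact hdist

theorem zero_mul_of_mul_self {p : A} (hep : S.e p = S.zero) (hpp : S.mul p p = p) :
    S.mul S.zero p = S.zero := by
  simpa only [hep] using S.e_mul_self_of_mul_self hpp

theorem zero_le_of_mul_self {p : A} (hp : p ≠ S.e p) (hep : S.e p = S.zero)
    (hpp : S.mul p p = p) : S.le S.zero p := by
  rcases S.le_total S.zero p with h | h
  · exact h
  · have hn := S.zero_le_neg hep h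
    have key := S.compat_mul (S.neg p) S.zero (S.neg p) (by rwa [S.e_neg, hep])
      (S.neg_ne_e hp).symm hn
    rwa [← S.neg_mul p S.zero, S.mul_comm p S.zero, S.zero_mul_of_mul_self hep hpp, S.neg_zero,
      ← S.neg_mul p (S.neg p), S.mul_comm p (S.neg p), ← S.neg_mul, hpp, S.neg_neg] at key

theorem mul_ne_zero_of_le {p s : A} (hp : p ≠ S.e p) (hep : S.e p = S.zero)
    (hpp : S.mul p p = p) (h : S.le p s) : S.mul p s ≠ S.zero := by
  intro hps
  have h0 := S.zero_le_of_mul_self hp hep hpp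
  have key := S.compat_mul p p s (by rwa [hep]) hp.symm h
  rw [hpp, hps] at key
  exact hp (by rw [hep]; exact S.le_antisymm _ _ key h0)

theorem mul_add_of_e_eq_zero {x y z : A} (hx : S.e x = S.zero) (hy : S.mul S.zero y = S.zero)
    (hz : S.mul S.zero z = S.zero) : S.mul x (S.add y z) = S.add (S.mul x y) (S.mul x z) := by
  rw [S.dist, hx, hy, hz, S.add_zero, S.add_zero]

theorem eq_one_of_mul_self {p : A} (hp : p ≠ S.e p) (hep : S.e p = S.zero)
    (hpp : S.mul p p = p) : p = S.one := by
  have he1 := S.e_one (S.ne_e_of_mul_ne_e (w := p) (by rwa [S.one_mul]))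
  have h0n : S.mul S.zero (S.neg p) = S.zero := by
    rw [S.mul_comm, ← S.neg_mul, S.mul_comm, S.zero_mul_of_mul_self hep hpp, S.neg_zero]
  have hes : S.e (S.add S.one (S.neg p)) = S.zero := by
    rw [S.e_add_eq_add_e, he1, S.e_neg, hep, S.add_zero]
  have hps : S.mul p (S.add S.one (S.neg p)) = S.zero := by
    rw [S.mul_add_of_e_eq_zero hep (S.mul_one S.zero) h0n, S.mul_one, S.mul_comm, ← S.neg_mul,
      hpp, S.add_neg, hep]
  have hss : S.mul (S.add S.one (S.neg p)) (S.add S.one (S.neg p)) = S.add S.one (S.neg p) := by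
    conv_lhs => rw [S.mul_add_of_e_eq_zero hes (S.mul_one S.zero) h0n]
    rw [S.mul_one, S.mul_comm _ (S.neg p), ← S.neg_mul, hps, S.neg_zero, S.add_zero]
  have hsum : S.add p (S.add S.one (S.neg p)) = S.one := by
    rw [S.add_comm S.one, S.add_assoc, S.add_neg, hep, S.zero_add]
  by_cases hs0 : S.add S.one (S.neg p) = S.zero
  · rwa [hs0, S.add_zero] at hsum
  · exfalso
    have hs : S.add S.one (S.neg p) ≠ S.e (S.add S.one (S.neg p)) := by rwa [hes]
    rcases S.le_total p (S.add S.one (S.neg p)) with h | h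
    · exact S.mul_ne_zero_of_le hp hep hpp h hps
    · exact S.mul_ne_zero_of_le hs hes hss h (by rw [S.mul_comm, hps])

theorem eq_one_add_e_of_mul_self {p : A} (hp : p ≠ S.e p) (hpp : S.mul p p = p) :
    p = S.add S.one (S.e p) := by
  have he1 := S.e_one (S.ne_e_of_mul_ne_e (w := p) (by rwa [S.one_mul]))
  have hEp := S.e_mul_self_of_mul_self hpp
  obtain ⟨a, hd, ha⟩ := S.decomp p
  set z := S.add S.one (S.e p) with hz_def
  have hez : S.e z = S.e p := by
    rw [hz_def, S.e_add_eq_add_e, he1, S.e_e, S.zero_add]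
  have hpz : p = S.add (S.mul p z) (S.e p) := by
    have h := S.dist p S.one (S.e p)
    rw [S.mul_one, S.mul_comm p (S.e p), hEp, S.mul_one, S.add_e, ← S.add_assoc,
      S.add_comm (S.e p), S.add_e_mul_e_self hEp] at h
    exact h
  have hz : z ≠ S.e z := by
    rw [hez]
    intro h
    exact hp (hpz.trans (by rw [h, S.mul_comm, hEp, S.e_add_e_self]))
  have hEz : S.mul (S.e p) z = S.e p := by
    have h := S.e_mul_eq_e_mul_of_decomp hz (c := S.one) (by rw [hez]) he1
    rw [hez, S.mul_one] at h
    exact h.symm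
  have hzp : S.mul z p = p := by
    have he : S.e (S.mul p z) = S.e p := by
      rw [S.e_mul, hEz, hez, hEp, S.e_add_e_self]
    rw [S.mul_comm, ← S.add_e (S.mul p z), he, ← hpz]
  have hza := S.mul_eq_of_decomp hp hpp hd ha hez hEz hzp
  have hpa := S.mul_eq_of_decomp hp hpp hd ha rfl hEp hpp
  have ha' : a ≠ S.e a := by
    rw [ha]
    intro h
    exact hp (hd.trans (by rw [h, S.zero_add]))
  rcases S.u_mul z a hz ha' with h | h <;> rw [hza, S.u_eq_self_of_mul_self hp hpp] at h
  · rw [← hzp, h, S.mul_u z hz]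
  · have hap : a = p := by rw [← S.mul_u a ha', ← h, S.mul_comm, hpa]
    have hep : S.e p = S.zero := hap ▸ ha
    rw [hz_def, hep, S.add_zero]
    exact S.eq_one_of_mul_self hp hep hpp

end Solid

theorem stmt18 {A : Type*} (S : Solid A) (x : A) (hx : x ≠ S.e x) :
    S.u x = S.add S.one (S.e (S.u x)) := by
  have hux : S.mul (S.u x) x ≠ S.e (S.mul (S.u x) x) := by
    rwa [S.mul_comm, S.mul_u x hx]
  exact S.eq_one_add_e_of_mul_self (S.ne_e_of_mul_ne_e hux) (S.u_max x hx _ (S.mul_u x hx))
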